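/- Two-parameter equality for the homology of the union: Let g be a one-critical 2-parameter filtration of a finite cell complex X over a field F (n = 2). Then for every grade u ∈ ℤ^2 and every integer q ≥ 0, dim_F H_q(X^{u−e_1} ∪ X^{u−e_2}) = dim_F H_q(X^u) − ξ_0^q(u) + ξ_1^q(u) + ξ_2^{q−1}(u). -/

import Mathlib

noncomputable section

open scoped Classical

section Hquot

variable {F : Type} [Field F] {A B C A' B' C' : Type}
  [AddCommGroup A] [AddCommGroup B] [AddCommGroup C]
  [AddCommGroup A'] [AddCommGroup B'] [AddCommGroup C']
  [Module F A] [Module F B] [Module F C]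
  [Module F A'] [Module F B'] [Module F C']

/-- The homology `ker dout / im din` of a pair of composable maps
`C --din--> B --dout--> A` (implemented as `ker dout / (ker dout ∩ im din)`,
which agrees with it when `im din ⊆ ker dout`). -/
abbrev Hquot (dout : B →ₗ[F] A) (din : C →ₗ[F] B) : Type :=
  ↥(LinearMap.ker dout) ⧸
    Submodule.comap (LinearMap.ker dout).subtype (LinearMap.range din)

/-- The map induced on homology by a map `f` commuting with the differentials. -/
noncomputable def HquotMap (dout : B →ₗ[F] A) (din : C →ₗ[F] B)
    (dout' : B' →ₗ[F] A') (din' : C' →ₗ[F] B') (f : B →ₗ[F] B')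
    (h1 : ∀ x : B, dout x = 0 → dout' (f x) = 0)
    (h2 : ∀ c : C, ∃ c' : C', f (din c) = din' c') :
    Hquot dout din →ₗ[F] Hquot dout' din' := by
  refine Submodule.liftQ _ ((Submodule.mkQ _).comp
    (f.restrict (p := LinearMap.ker dout) (q := LinearMap.ker dout')
      (fun x hx => by
        simp only [LinearMap.mem_ker] at hx ⊢
        exact h1 x hx))) ?_
  intro x hx
  simp only [Submodule.mem_comap, LinearMap.mem_range] at hx
  obtain ⟨c, hc⟩ := hx
  obtain ⟨c', hc'⟩ := h2 c
  simp only [LinearMap.mem_ker, LinearMap.coe_comp, Function.comp_apply, Submodule.mkQ_apply]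
  rw [Submodule.Quotient.mk_eq_zero]
  simp only [Submodule.mem_comap, LinearMap.mem_range, Submodule.coe_subtype,
    LinearMap.restrict_apply]
  exact ⟨c', by rw [← hc', hc]; rfl⟩

end Hquot

/-- A finite cell complex over a field `F`. -/
structure CellComplex (F : Type) [Field F] where
  cell : Type
  [cellFintype : Fintype cell]
  dim : cell → ℕ
  κ : cell → cell → F
  dim_incidence : ∀ τ σ : cell, κ τ σ ≠ 0 → dim τ = dim σ + 1
  incidence_comp : ∀ τ σ : cell, ∑ ρ : cell, κ τ ρ * κ ρ σ = 0

attribute [instance] CellComplex.cellFintype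

/-- `j`-th standard basis vector of `ℤⁿ`. -/
def eb {n : ℕ} (j : Fin n) : Fin n → ℤ := fun i => if i = j then 1 else 0

/-- `e_σ = ∑_{j ∈ σ} e_j`. -/
def eS {n : ℕ} (s : Finset (Fin n)) : Fin n → ℤ := ∑ j ∈ s, eb j

theorem eb_nonneg {n : ℕ} (j : Fin n) (i : Fin n) : (0 : ℤ) ≤ eb j i := by
  by_cases h : i = j <;> simp [eb, h]

theorem eS_le_insert {n : ℕ} (j : Fin n) (s : Finset (Fin n)) : eS s ≤ eS (insert j s) := by
  classical
  by_cases h : j ∈ s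
  · rw [Finset.insert_eq_self.2 h]
  · rw [eS, eS, Finset.sum_insert h]
    intro i
    have h0 : (0 : ℤ) ≤ eb j i := eb_nonneg j i
    simp only [Pi.add_apply]
    omega

namespace CellComplex

variable {F : Type} [Field F] (X : CellComplex F)

/-- The `k`-dimensional cells lying in a subset `S`. -/
def cells (S : Set X.cell) (k : ℤ) : Type :=
  {c : X.cell // (X.dim c : ℤ) = k ∧ c ∈ S}

instance (S : Set X.cell) (k : ℤ) : Fintype (X.cells S k) := by
  unfold cells; exact Fintype.ofFinite _

/-- The space of `k`-chains supported on `S`. -/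
abbrev Cz (S : Set X.cell) (k : ℤ) : Type := X.cells S k → F

/-- The boundary operator (from degree `a` to degree `b`) of the chain complex on `S`. -/
noncomputable def D (S : Set X.cell) (a b : ℤ) : X.Cz S a →ₗ[F] X.Cz S b where
  toFun f := fun σ => ∑ τ : X.cells S a, X.κ τ.1 σ.1 * f τ
  map_add' f g := by
    funext σ
    simp only [Pi.add_apply, mul_add]
    rw [Finset.sum_add_distrib]
  map_smul' r f := by
    funext σ
    simp only [Pi.smul_apply, smul_eq_mul, RingHom.id_apply]
    rw [Finset.mul_sum]
    exact Finset.sum_congr rfl fun τ _ => by ring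

@[simp] theorem D_apply (S : Set X.cell) (a b : ℤ) (f : X.Cz S a) (σ : X.cells S b) :
    X.D S a b f σ = ∑ τ : X.cells S a, X.κ τ.1 σ.1 * f τ := rfl

/-- Extension by zero of chains on `S` to chains on `T ⊇ S`. -/
noncomputable def inclC (S T : Set X.cell) (hST : S ⊆ T) (k : ℤ) :
    X.Cz S k →ₗ[F] X.Cz T k where
  toFun f := fun σ => if hs : σ.1 ∈ S then f ⟨σ.1, ⟨σ.2.1, hs⟩⟩ else 0
  map_add' f g := by
    funext σ
    by_cases hs : σ.1 ∈ S <;> simp [hs] <;> rfl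
  map_smul' r f := by
    funext σ
    by_cases hs : σ.1 ∈ S <;> simp [hs] <;> rfl

@[simp] theorem inclC_apply (S T : Set X.cell) (hST : S ⊆ T) (k : ℤ) (f : X.Cz S k)
    (σ : X.cells T k) :
    X.inclC S T hST k f σ = if hs : σ.1 ∈ S then f ⟨σ.1, ⟨σ.2.1, hs⟩⟩ else 0 := rfl

theorem sum_cells_eq (S : Set X.cell) (a : ℤ) (G : X.cell → F)
    (hG : ∀ c : X.cell, ¬((X.dim c : ℤ) = a ∧ c ∈ S) → G c = 0) :
    (∑ τ : X.cells S a, G τ.1) = ∑ c : X.cell, G c := by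
  classical
  have h1 : (∑ c ∈ Finset.univ.filter (fun c => (X.dim c : ℤ) = a ∧ c ∈ S), G c)
      = ∑ c : X.cell, G c :=
    Finset.sum_filter_of_ne (fun c _ hc => by_contra fun h => hc (hG c h))
  rw [← h1]
  exact (Finset.sum_subtype _ (fun c => by simp) G).symm

theorem incl_comm_apply (S T : Set X.cell) (hST : S ⊆ T)
    (hS : ∀ τ σ : X.cell, τ ∈ S → X.κ τ σ ≠ 0 → σ ∈ S)
    (a b : ℤ) (f : X.Cz S a) (σ : X.cells T b) :
    X.D T a b (X.inclC S T hST a f) σ = X.inclC S T hST b (X.D S a b f) σ := by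
  classical
  by_cases hσ : σ.1 ∈ S
  · rw [D_apply, inclC_apply, dif_pos hσ]
    calc (∑ τ : X.cells T a, X.κ τ.1 σ.1 * (X.inclC S T hST a f) τ)
        = ∑ τ : X.cells T a,
            (if hc : (X.dim τ.1 : ℤ) = a ∧ τ.1 ∈ S then X.κ τ.1 σ.1 * f ⟨τ.1, hc⟩ else 0) := by
          refine Finset.sum_congr rfl fun τ _ => ?_
          rw [inclC_apply]
          by_cases hτ : τ.1 ∈ S
          · rw [dif_pos hτ, dif_pos ⟨τ.2.1, hτ⟩]
          · rw [dif_neg hτ, mul_zero, dif_neg (fun h => hτ h.2)]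
      _ = ∑ c : X.cell,
            (if hc : (X.dim c : ℤ) = a ∧ c ∈ S then X.κ c σ.1 * f ⟨c, hc⟩ else 0) :=
          X.sum_cells_eq T a
            (fun c => if hc : (X.dim c : ℤ) = a ∧ c ∈ S then X.κ c σ.1 * f ⟨c, hc⟩ else 0)
            (fun c hc => dif_neg (fun h => hc ⟨h.1, hST h.2⟩))
      _ = ∑ τ : X.cells S a,
            (if hc : (X.dim τ.1 : ℤ) = a ∧ τ.1 ∈ S then X.κ τ.1 σ.1 * f ⟨τ.1, hc⟩ else 0) :=
          (X.sum_cells_eq S a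
            (fun c => if hc : (X.dim c : ℤ) = a ∧ c ∈ S then X.κ c σ.1 * f ⟨c, hc⟩ else 0)
            (fun c hc => dif_neg hc)).symm
      _ = ∑ τ : X.cells S a, X.κ τ.1 σ.1 * f τ := by
          refine Finset.sum_congr rfl fun τ _ => ?_
          rw [dif_pos ⟨τ.2.1, τ.2.2⟩]
          rfl
  · rw [D_apply, inclC_apply, dif_neg hσ]
    refine Finset.sum_eq_zero fun τ _ => ?_
    rw [inclC_apply]
    by_cases hτ : τ.1 ∈ S
    · rw [dif_pos hτ]
      rcases eq_or_ne (X.κ τ.1 σ.1) 0 with h | h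
      · rw [h, zero_mul]
      · exact absurd (hS τ.1 σ.1 hτ h) hσ
    · rw [dif_neg hτ, mul_zero]

/-- The `q`-th homology of (the chain complex on) `S`. -/
abbrev Hsp (S : Set X.cell) (q : ℤ) : Type :=
  Hquot (X.D S q (q - 1)) (X.D S (q + 1) q)

/-- The dimension of the `q`-th homology of `S`. -/
noncomputable def Hd (S : Set X.cell) (q : ℤ) : ℕ := Module.finrank F (X.Hsp S q)

/-- The map induced on homology by an inclusion `S ⊆ T` of face-closed subsets. -/
noncomputable def Hmap (S T : Set X.cell) (hST : S ⊆ T)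
    (hS : ∀ τ σ : X.cell, τ ∈ S → X.κ τ σ ≠ 0 → σ ∈ S) (q : ℤ) :
    X.Hsp S q →ₗ[F] X.Hsp T q :=
  HquotMap _ _ _ _ (X.inclC S T hST q)
    (fun x hx => by
      funext σ
      rw [X.incl_comm_apply S T hST hS q (q - 1) x σ, hx]
      simp
      intro _
      rfl)
    (fun c => ⟨X.inclC S T hST (q + 1) c, by
      funext σ
      exact (X.incl_comm_apply S T hST hS (q + 1) q c σ).symm⟩)

/-! ### Multi-parameter filtrations -/

variable {n : ℕ}

/-- The subcomplex at grade `u` of the filtration with entrance-grade function `g`. -/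
def Xset (g : X.cell → Fin n → ℤ) (u : Fin n → ℤ) : Set X.cell := {c | g c ≤ u}

theorem Xset_mono (g : X.cell → Fin n → ℤ) {u v : Fin n → ℤ} (huv : u ≤ v) :
    X.Xset g u ⊆ X.Xset g v := fun _ hc => le_trans hc huv

theorem Xset_faceClosed (g : X.cell → Fin n → ℤ)
    (hg : ∀ τ σ : X.cell, X.κ τ σ ≠ 0 → g σ ≤ g τ) (u : Fin n → ℤ) :
    ∀ τ σ : X.cell, τ ∈ X.Xset g u → X.κ τ σ ≠ 0 → σ ∈ X.Xset g u :=
  fun τ σ hτ hκ => le_trans (hg τ σ hκ) hτ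

/-- The union `∪_j X^{u-e_j}`. -/
def Uset (g : X.cell → Fin n → ℤ) (u : Fin n → ℤ) : Set X.cell :=
  ⋃ j : Fin n, X.Xset g (u - eb j)

/-- `c_q(u) = dim H_q(X^u, ∪_j X^{u-e_j})`, the homology of the quotient chain complex,
i.e. of the chain complex spanned by the cells entering the filtration at grade `u`. -/
noncomputable def ccount (g : X.cell → Fin n → ℤ) (q : ℤ) (u : Fin n → ℤ) : ℕ :=
  X.Hd (X.Xset g u \ X.Uset g u) q

theorem Uset_subset_Xset (g : X.cell → Fin n → ℤ) (u : Fin n → ℤ) :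
    X.Uset g u ⊆ X.Xset g u := by
  intro c hc
  rcases Set.mem_iUnion.1 hc with ⟨j, hj⟩
  have hj' : g c ≤ u - eb j := hj
  show g c ≤ u
  refine le_trans hj' ?_
  intro i
  have h0 : (0 : ℤ) ≤ eb j i := eb_nonneg j i
  simp only [Pi.sub_apply]
  omega

theorem Uset_faceClosed (g : X.cell → Fin n → ℤ)
    (hg : ∀ τ σ : X.cell, X.κ τ σ ≠ 0 → g σ ≤ g τ) (u : Fin n → ℤ) :
    ∀ τ σ : X.cell, τ ∈ X.Uset g u → X.κ τ σ ≠ 0 → σ ∈ X.Uset g u := by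
  intro τ σ hτ hκ
  rcases Set.mem_iUnion.1 hτ with ⟨j, hj⟩
  exact Set.mem_iUnion.2 ⟨j, X.Xset_faceClosed g hg _ τ σ hj hκ⟩

/-- Degree-`i` part `⊕_{|σ|=i} H_q(X^{u-e_σ})` of the Koszul complex of the `q`-th
persistent homology module at grade `u`. -/
abbrev Ksp (g : X.cell → Fin n → ℤ) (q : ℤ) (u : Fin n → ℤ) (i : ℤ) : Type :=
  ∀ s : {s : Finset (Fin n) // (s.card : ℤ) = i},
    X.Hsp (X.Xset g (u - eS s.1)) q

set_option maxHeartbeats 1000000 in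
/-- The Koszul differential (from degree `a` to degree `b`). -/
noncomputable def KD (g : X.cell → Fin n → ℤ)
    (hg : ∀ τ σ : X.cell, X.κ τ σ ≠ 0 → g σ ≤ g τ) (q : ℤ) (u : Fin n → ℤ) (a b : ℤ) :
    X.Ksp g q u a →ₗ[F] X.Ksp g q u b where
  toFun f := fun t => ∑ j ∈ t.1ᶜ,
    ((-1 : F) ^ (t.1.filter (fun k => j < k)).card) •
      (if h : ((insert j t.1).card : ℤ) = a then
        X.Hmap (X.Xset g (u - eS (insert j t.1))) (X.Xset g (u - eS t.1))
          (X.Xset_mono g (sub_le_sub_left (eS_le_insert j t.1) u))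
          (X.Xset_faceClosed g hg _) q (f ⟨insert j t.1, h⟩)
      else 0)
  map_add' f f' := by
    funext t
    simp only [Pi.add_apply]
    rw [← Finset.sum_add_distrib]
    refine Finset.sum_congr rfl fun j hj => ?_
    by_cases h : ((insert j t.1).card : ℤ) = a
    · simp only [dif_pos h, Pi.add_apply, map_add, smul_add]
    · simp only [dif_neg h, smul_zero, add_zero]
  map_smul' r f := by
    funext t
    simp only [Pi.smul_apply, RingHom.id_apply]
    rw [Finset.smul_sum]
    refine Finset.sum_congr rfl fun j hj => ?_
    by_cases h : ((insert j t.1).card : ℤ) = a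
    · simp only [dif_pos h, Pi.smul_apply, map_smul]
      rw [smul_comm]
    · simp only [dif_neg h, smul_zero]

set_option maxHeartbeats 1000000 in
/-- The Betti table `ξ_p^q(u)`: the dimension of the degree-`p` homology of the Koszul
complex of the `q`-th persistent homology module at grade `u` (zero when `q < 0`). -/
noncomputable def xi (g : X.cell → Fin n → ℤ)
    (hg : ∀ τ σ : X.cell, X.κ τ σ ≠ 0 → g σ ≤ g τ) (p : ℕ) (q : ℤ) (u : Fin n → ℤ) : ℕ :=
  Module.finrank F
    (Hquot (X.KD g hg q u (p : ℤ) ((p : ℤ) - 1)) (X.KD g hg q u ((p : ℤ) + 1) (p : ℤ)))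

/-- The map `i_q^u : H_q(∪_j X^{u-e_j}) → H_q(X^u)` induced by the inclusion. -/
noncomputable def imap (g : X.cell → Fin n → ℤ)
    (hg : ∀ τ σ : X.cell, X.κ τ σ ≠ 0 → g σ ≤ g τ) (u : Fin n → ℤ) (q : ℤ) :
    X.Hsp (X.Uset g u) q →ₗ[F] X.Hsp (X.Xset g u) q :=
  X.Hmap _ _ (X.Uset_subset_Xset g u) (X.Uset_faceClosed g hg u) q

/-- The map `ε̄_q^u : ⊕_j H_q(X^{u-e_j}) → H_q(∪_j X^{u-e_j})` whose restriction to each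
summand is induced by the corresponding inclusion. -/
noncomputable def epsmap (g : X.cell → Fin n → ℤ)
    (hg : ∀ τ σ : X.cell, X.κ τ σ ≠ 0 → g σ ≤ g τ) (u : Fin n → ℤ) (q : ℤ) :
    (∀ j : Fin n, X.Hsp (X.Xset g (u - eb j)) q) →ₗ[F] X.Hsp (X.Uset g u) q :=
  ∑ j : Fin n, (X.Hmap (X.Xset g (u - eb j)) (X.Uset g u)
      (Set.subset_iUnion (fun j => X.Xset g (u - eb j)) j)
      (X.Xset_faceClosed g hg _) q).comp (LinearMap.proj j)

end CellComplex

/-!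
Write `A = X^{u-e₁}` and `B = X^{u-e₂}`, so that `A ∩ B = X^{u-e₁-e₂}`, and let `K_q` be the common
kernel of `H_q(A ∩ B) → H_q(A)` and `H_q(A ∩ B) → H_q(B)`. The Mayer–Vietoris sequence gives
`dim H_q(A ∪ B) = dim H_q(A) + dim H_q(B) - dim H_q(A ∩ B) + dim K_q + dim K_{q-1}`.
On the Koszul side `K_q = ker d₂`, so `ξ₂^{q-1}(u) = dim K_{q-1}`, while `ξ₀^q(u)`, `ξ₁^q(u)` and
rank–nullity for `d₂` account for the remaining terms. The Mayer–Vietoris count is checked directly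
on cycles and boundaries inside the chain complex of all of `X`, without building the long exact
sequence.
-/

section LinearAlgebra

variable {F : Type} [Field F] {A B C : Type} [AddCommGroup A] [AddCommGroup B] [AddCommGroup C]
  [Module F A] [Module F B] [Module F C]

open Module

theorem finrank_comap_subtype (p q : Submodule F B) :
    finrank F (q.comap p.subtype) = finrank F ↥(p ⊓ q) := by
  rw [← Submodule.finrank_map_subtype_eq, Submodule.map_comap_subtype]

theorem finrank_map_of_injective {f : B →ₗ[F] A} (hf : Function.Injective f)
    (p : Submodule F B) : finrank F (p.map f) = finrank F p :=
  (Submodule.equivMapOfInjective f hf p).finrank_eq.symm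

theorem finrank_comap_mkQ [FiniteDimensional F B] (p : Submodule F B)
    (K : Submodule F (B ⧸ p)) : finrank F (K.comap p.mkQ) = finrank F K + finrank F p := by
  have hp : p ≤ K.comap p.mkQ := fun x hx => by simp [(Submodule.Quotient.mk_eq_zero p).2 hx]
  have h := LinearMap.finrank_range_add_finrank_ker (p.mkQ.domRestrict (K.comap p.mkQ))
  rwa [LinearMap.range_domRestrict, Submodule.map_comap_eq_of_surjective p.mkQ_surjective,
    LinearMap.ker_domRestrict, Submodule.ker_mkQ, finrank_comap_subtype,
    inf_eq_right.2 hp, eq_comm] at h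

theorem finrank_Hquot_add_finrank_range [FiniteDimensional F B] {dout : B →ₗ[F] A}
    {din : C →ₗ[F] B} (h : LinearMap.range din ≤ LinearMap.ker dout) :
    finrank F (Hquot dout din) + finrank F (LinearMap.range din)
      = finrank F (LinearMap.ker dout) := by
  have := Submodule.finrank_quotient_add_finrank
    ((LinearMap.range din).comap (LinearMap.ker dout).subtype)
  rwa [finrank_comap_subtype, inf_eq_right.2 h] at this

/-- `L` induces a surjection of `B` onto `W ⧸ P` whose kernel is `P.comap L`. -/
theorem finrank_add_finrank_eq_of_forall_mem_sub [FiniteDimensional F A] [FiniteDimensional F B]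
    (L : B →ₗ[F] A) {P W : Submodule F A} (hPW : P ≤ W) (hLW : LinearMap.range L ≤ W)
    (hsurj : ∀ w ∈ W, ∃ v, L v - w ∈ P) :
    finrank F B + finrank F P = finrank F W + finrank F (P.comap L) := by
  let P' := P.comap W.subtype
  let δ := P'.mkQ ∘ₗ L.codRestrict W fun v => hLW ⟨v, rfl⟩
  have hδ : Function.Surjective δ := by
    intro y
    obtain ⟨w, rfl⟩ := P'.mkQ_surjective y
    obtain ⟨v, hv⟩ := hsurj w w.2
    exact ⟨v, (Submodule.Quotient.eq P').2 hv⟩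
  have hker : LinearMap.ker δ = P.comap L := by
    ext v
    simp [δ, P', Submodule.Quotient.mk_eq_zero]
  have hrank := LinearMap.finrank_range_add_finrank_ker δ
  have hquot := Submodule.finrank_quotient_add_finrank P'
  rw [LinearMap.range_eq_top.2 hδ, finrank_top, hker] at hrank
  rw [finrank_comap_subtype, inf_eq_right.2 hPW] at hquot
  omega

end LinearAlgebra

theorem eS_empty {n : ℕ} : eS (∅ : Finset (Fin n)) = 0 := by simp [eS]

theorem eS_singleton {n : ℕ} (j : Fin n) : eS {j} = eb j := by simp [eS]

theorem eS_mono {n : ℕ} {s t : Finset (Fin n)} (h : s ⊆ t) : eS s ≤ eS t := fun i => by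
  simp only [eS, Finset.sum_apply]
  exact Finset.sum_le_sum_of_subset_of_nonneg h fun j _ _ => eb_nonneg j i

namespace CellComplex

variable {F : Type} [Field F] (X : CellComplex F)

open Module

def FaceClosed (S : Set X.cell) : Prop := ∀ τ σ : X.cell, τ ∈ S → X.κ τ σ ≠ 0 → σ ∈ S

variable {X}

theorem FaceClosed.union {S T : Set X.cell} (hS : X.FaceClosed S) (hT : X.FaceClosed T) :
    X.FaceClosed (S ∪ T) :=
  fun τ σ hτ hκ => hτ.imp (hS τ σ · hκ) (hT τ σ · hκ)

theorem faceClosed_univ : X.FaceClosed Set.univ := fun _ _ _ _ => trivial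

variable (X)

theorem inclC_injective (S T : Set X.cell) (hST : S ⊆ T) (k : ℤ) :
    Function.Injective (X.inclC S T hST k) := by
  intro f f' h
  funext σ
  have h := congrFun h ⟨σ.1, σ.2.1, hST σ.2.2⟩
  exact (dif_pos σ.2.2).symm.trans (h.trans (dif_pos σ.2.2))

theorem inclC_inclC (R S T : Set X.cell) (hRS : R ⊆ S) (hST : S ⊆ T) (k : ℤ) (f : X.Cz R k) :
    X.inclC S T hST k (X.inclC R S hRS k f) = X.inclC R T (hRS.trans hST) k f := by
  funext σ
  by_cases hR : σ.1 ∈ R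
  · exact (dif_pos (hRS hR)).trans ((dif_pos hR).trans (dif_pos hR : X.inclC R T _ k f σ = _).symm)
  · rw [inclC_apply, inclC_apply, dif_neg hR]
    split_ifs
    · exact dif_neg hR
    · rfl

theorem D_comp_inclC {S T : Set X.cell} (hST : S ⊆ T) (hS : X.FaceClosed S) (a b : ℤ) :
    X.D T a b ∘ₗ X.inclC S T hST a = X.inclC S T hST b ∘ₗ X.D S a b :=
  LinearMap.ext fun f => funext (X.incl_comm_apply S T hST hS a b f)

theorem D_D_apply {S : Set X.cell} (hS : X.FaceClosed S) (q : ℤ) (f : X.Cz S (q + 1)) :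
    X.D S q (q - 1) (X.D S (q + 1) q f) = 0 := by
  funext σ
  simp only [D_apply, Finset.mul_sum, Pi.zero_apply]
  rw [Finset.sum_comm]
  refine Finset.sum_eq_zero fun ρ _ => ?_
  have hκ : ∑ τ : X.cells S q, X.κ ρ.1 τ.1 * X.κ τ.1 σ.1 = 0 := by
    rw [X.sum_cells_eq S q (fun c => X.κ ρ.1 c * X.κ c σ.1), X.incidence_comp]
    intro c hc
    by_contra h
    have hρc := left_ne_zero_of_mul h
    have hdim := X.dim_incidence ρ.1 c hρc
    exact hc ⟨by have := ρ.2.1; omega, hS ρ.1 c ρ.2.2 hρc⟩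
  calc ∑ τ : X.cells S q, X.κ τ.1 σ.1 * (X.κ ρ.1 τ.1 * f ρ)
      = (∑ τ : X.cells S q, X.κ ρ.1 τ.1 * X.κ τ.1 σ.1) * f ρ := by
        rw [Finset.sum_mul]
        exact Finset.sum_congr rfl fun _ _ => by ring
    _ = 0 := by rw [hκ, zero_mul]

theorem range_D_le_ker_D {S : Set X.cell} (hS : X.FaceClosed S) (q : ℤ) :
    LinearMap.range (X.D S (q + 1) q) ≤ LinearMap.ker (X.D S q (q - 1)) := by
  rintro _ ⟨f, rfl⟩
  exact X.D_D_apply hS q f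

def chainsOn (S : Set X.cell) (k : ℤ) : Submodule F (X.Cz Set.univ k) where
  carrier := {f | ∀ σ : X.cells Set.univ k, σ.1 ∉ S → f σ = 0}
  add_mem' hf hf' σ hσ := by simp [hf σ hσ, hf' σ hσ]
  zero_mem' _ _ := rfl
  smul_mem' r f hf σ hσ := by simp [hf σ hσ]

theorem chainsOn_mono {S T : Set X.cell} (h : S ⊆ T) (k : ℤ) : X.chainsOn S k ≤ X.chainsOn T k :=
  fun _ hf σ hσ => hf σ fun hs => hσ (h hs)

def restrictTo (S : Set X.cell) (k : ℤ) : X.Cz Set.univ k →ₗ[F] X.Cz Set.univ k where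
  toFun f σ := if σ.1 ∈ S then f σ else 0
  map_add' f f' := by funext σ; by_cases h : σ.1 ∈ S <;> simp [h]
  map_smul' r f := by funext σ; by_cases h : σ.1 ∈ S <;> simp [h]

theorem restrictTo_apply (S : Set X.cell) (k : ℤ) (f : X.Cz Set.univ k)
    (σ : X.cells Set.univ k) : X.restrictTo S k f σ = if σ.1 ∈ S then f σ else 0 := rfl

theorem restrictTo_mem (S : Set X.cell) (k : ℤ) (f : X.Cz Set.univ k) :
    X.restrictTo S k f ∈ X.chainsOn S k :=
  fun σ hσ => by simp [restrictTo_apply, hσ]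

theorem restrictTo_of_mem {S : Set X.cell} {k : ℤ} {f : X.Cz Set.univ k}
    (hf : f ∈ X.chainsOn S k) : X.restrictTo S k f = f := by
  funext σ
  by_cases h : σ.1 ∈ S
  · simp [restrictTo_apply, h]
  · simp [restrictTo_apply, h, hf σ h]

theorem sub_restrictTo_mem {S T : Set X.cell} {k : ℤ} {f : X.Cz Set.univ k}
    (hf : f ∈ X.chainsOn (S ∪ T) k) : f - X.restrictTo S k f ∈ X.chainsOn T k := by
  intro σ hσ
  by_cases h : σ.1 ∈ S
  · simp [restrictTo_apply, h]
  · simp [restrictTo_apply, h, hf σ fun hc => hc.elim h hσ]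

theorem restrictTo_mem_inter (S : Set X.cell) {T : Set X.cell} {k : ℤ} {f : X.Cz Set.univ k}
    (hf : f ∈ X.chainsOn T k) : X.restrictTo S k f ∈ X.chainsOn (S ∩ T) k := by
  intro σ hσ
  by_cases h : σ.1 ∈ S
  · simp [restrictTo_apply, h, hf σ fun ht => hσ ⟨h, ht⟩]
  · simp [restrictTo_apply, h]

theorem chainsOn_inter (S T : Set X.cell) (k : ℤ) :
    X.chainsOn (S ∩ T) k = X.chainsOn S k ⊓ X.chainsOn T k := by
  refine le_antisymm (le_inf (X.chainsOn_mono Set.inter_subset_left k)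
    (X.chainsOn_mono Set.inter_subset_right k)) fun f ⟨hS, hT⟩ σ hσ => ?_
  by_cases h : σ.1 ∈ S
  · exact hT σ fun ht => hσ ⟨h, ht⟩
  · exact hS σ h

theorem chainsOn_union (S T : Set X.cell) (k : ℤ) :
    X.chainsOn (S ∪ T) k = X.chainsOn S k ⊔ X.chainsOn T k := by
  refine le_antisymm (fun f hf => ?_) (sup_le (X.chainsOn_mono Set.subset_union_left k)
    (X.chainsOn_mono Set.subset_union_right k))
  rw [← add_sub_cancel (X.restrictTo S k f) f]
  exact Submodule.add_mem_sup (X.restrictTo_mem S k f) (X.sub_restrictTo_mem hf)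

theorem range_inclC (S : Set X.cell) (k : ℤ) :
    LinearMap.range (X.inclC S Set.univ (Set.subset_univ S) k) = X.chainsOn S k := by
  refine le_antisymm ?_ fun f hf => ⟨fun σ => f ⟨σ.1, σ.2.1, trivial⟩, ?_⟩
  · rintro _ ⟨f, rfl⟩ σ hσ
    simp [hσ]
  · funext σ
    by_cases hσ : σ.1 ∈ S
    · exact dif_pos hσ
    · rw [inclC_apply, dif_neg hσ, hf σ hσ]

theorem D_mem_chainsOn {S : Set X.cell} (hS : X.FaceClosed S) {a : ℤ} (b : ℤ)
    {f : X.Cz Set.univ a} (hf : f ∈ X.chainsOn S a) : X.D Set.univ a b f ∈ X.chainsOn S b := by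
  intro σ hσ
  refine Finset.sum_eq_zero fun τ _ => ?_
  by_cases hτ : τ.1 ∈ S
  · by_cases hκ : X.κ τ.1 σ.1 = 0
    · rw [hκ, zero_mul]
    · exact absurd (hS τ.1 σ.1 hτ hκ) hσ
  · rw [hf τ hτ, mul_zero]

theorem map_inclC_ker {S : Set X.cell} (hS : X.FaceClosed S) (a b : ℤ) :
    (LinearMap.ker (X.D S a b)).map (X.inclC S Set.univ (Set.subset_univ S) a)
      = X.chainsOn S a ⊓ LinearMap.ker (X.D Set.univ a b) := by
  rw [← X.range_inclC, ← Submodule.map_comap_eq, ← LinearMap.ker_comp, X.D_comp_inclC _ hS,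
    LinearMap.ker_comp_of_ker_eq_bot _ (LinearMap.ker_eq_bot.2 (X.inclC_injective _ _ _ b))]

theorem map_inclC_range {S : Set X.cell} (hS : X.FaceClosed S) (a b : ℤ) :
    (LinearMap.range (X.D S a b)).map (X.inclC S Set.univ (Set.subset_univ S) b)
      = (X.chainsOn S a).map (X.D Set.univ a b) := by
  rw [← X.range_inclC, ← LinearMap.range_comp, ← LinearMap.range_comp, X.D_comp_inclC _ hS]

def cyclesOn (S : Set X.cell) (q : ℤ) : Submodule F (X.Cz Set.univ q) :=
  X.chainsOn S q ⊓ LinearMap.ker (X.D Set.univ q (q - 1))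

/-- Both degrees are parameters because `X.Cz S (q - 1 + 1)` and `X.Cz S q` are different types. -/
def boundariesOn (S : Set X.cell) (a b : ℤ) : Submodule F (X.Cz Set.univ b) :=
  (X.chainsOn S a).map (X.D Set.univ a b)

theorem cyclesOn_mono {S T : Set X.cell} (h : S ⊆ T) (q : ℤ) : X.cyclesOn S q ≤ X.cyclesOn T q :=
  inf_le_inf_right _ (X.chainsOn_mono h q)

theorem cyclesOn_inter (S T : Set X.cell) (q : ℤ) :
    X.cyclesOn (S ∩ T) q = X.cyclesOn S q ⊓ X.cyclesOn T q := by
  rw [cyclesOn, cyclesOn, cyclesOn, chainsOn_inter, inf_inf_distrib_right]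

theorem boundariesOn_mono {S T : Set X.cell} (h : S ⊆ T) (a b : ℤ) :
    X.boundariesOn S a b ≤ X.boundariesOn T a b :=
  Submodule.map_mono (X.chainsOn_mono h a)

theorem boundariesOn_le_cyclesOn {S : Set X.cell} (hS : X.FaceClosed S) (q : ℤ) :
    X.boundariesOn S (q + 1) q ≤ X.cyclesOn S q := by
  rintro _ ⟨f, hf, rfl⟩
  exact ⟨X.D_mem_chainsOn hS q hf, X.range_D_le_ker_D faceClosed_univ q ⟨f, rfl⟩⟩

instance (S : Set X.cell) (q : ℤ) : FiniteDimensional F (X.Hsp S q) := by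
  unfold Hsp Hquot
  infer_instance

theorem finrank_ker_D {S : Set X.cell} (hS : X.FaceClosed S) (a b : ℤ) :
    finrank F (LinearMap.ker (X.D S a b))
      = finrank F ↥(X.chainsOn S a ⊓ LinearMap.ker (X.D Set.univ a b)) := by
  rw [← X.map_inclC_ker hS, finrank_map_of_injective (X.inclC_injective _ _ _ a)]

theorem finrank_range_D {S : Set X.cell} (hS : X.FaceClosed S) (a b : ℤ) :
    finrank F (LinearMap.range (X.D S a b)) = finrank F (X.boundariesOn S a b) := by
  rw [boundariesOn, ← X.map_inclC_range hS, finrank_map_of_injective (X.inclC_injective _ _ _ b)]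

theorem Hd_add_finrank_boundariesOn {S : Set X.cell} (hS : X.FaceClosed S) (q : ℤ) :
    X.Hd S q + finrank F (X.boundariesOn S (q + 1) q) = finrank F (X.cyclesOn S q) := by
  rw [Hd, ← X.finrank_range_D hS, cyclesOn, ← X.finrank_ker_D hS]
  exact finrank_Hquot_add_finrank_range (X.range_D_le_ker_D hS q)

theorem finrank_boundariesOn_union (S T : Set X.cell) (a b : ℤ) :
    finrank F (X.boundariesOn (S ∪ T) a b)
        + finrank F ↥(X.boundariesOn S a b ⊓ X.boundariesOn T a b)
      = finrank F (X.boundariesOn S a b) + finrank F (X.boundariesOn T a b) := by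
  rw [boundariesOn, chainsOn_union, Submodule.map_sup]
  exact Submodule.finrank_sup_add_finrank_inf_eq _ _

section MayerVietoris

variable (S T : Set X.cell) {q : ℤ}

/-! The connecting map `H_q(S ∪ T) → H_{q-1}(S ∩ T)` sends a cycle `z` to the boundary of its
part on `S`. -/

theorem D_restrictTo_mem_boundariesOn {z : X.Cz Set.univ q} (hz : z ∈ X.cyclesOn (S ∪ T) q) :
    X.D Set.univ q (q - 1) (X.restrictTo S q z)
      ∈ X.boundariesOn S q (q - 1) ⊓ X.boundariesOn T q (q - 1) := by
  refine ⟨⟨_, X.restrictTo_mem S q z, rfl⟩, ⟨X.restrictTo S q z - z, ?_, ?_⟩⟩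
  · rw [← neg_sub]
    exact neg_mem (X.sub_restrictTo_mem hz.1)
  · rw [map_sub, LinearMap.mem_ker.1 hz.2, sub_zero]

theorem exists_D_restrictTo_sub_mem {w : X.Cz Set.univ (q - 1)}
    (hw : w ∈ X.boundariesOn S q (q - 1) ⊓ X.boundariesOn T q (q - 1)) :
    ∃ z ∈ X.cyclesOn (S ∪ T) q,
      X.D Set.univ q (q - 1) (X.restrictTo S q z) - w ∈ X.boundariesOn (S ∩ T) q (q - 1) := by
  obtain ⟨⟨a, ha, rfl⟩, ⟨b, hb, hab⟩⟩ := hw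
  refine ⟨a - b, ⟨sub_mem (X.chainsOn_mono Set.subset_union_left q ha)
    (X.chainsOn_mono Set.subset_union_right q hb), by simp [hab]⟩,
    ⟨-X.restrictTo S q b, neg_mem (X.restrictTo_mem_inter S hb), ?_⟩⟩
  rw [map_sub, X.restrictTo_of_mem ha, map_sub, map_neg]
  abel

theorem D_restrictTo_mem_boundariesOn_inter_iff {z : X.Cz Set.univ q}
    (hz : z ∈ X.cyclesOn (S ∪ T) q) :
    X.D Set.univ q (q - 1) (X.restrictTo S q z) ∈ X.boundariesOn (S ∩ T) q (q - 1)
      ↔ z ∈ X.cyclesOn S q ⊔ X.cyclesOn T q := by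
  have hdz := LinearMap.mem_ker.1 hz.2
  constructor
  · rintro ⟨e, he, hde⟩
    rw [X.chainsOn_inter] at he
    rw [← add_sub_cancel (X.restrictTo S q z - e) z]
    refine Submodule.add_mem_sup ⟨sub_mem (X.restrictTo_mem S q z) he.1, ?_⟩
      ⟨?_, ?_⟩
    · simp [hde]
    · rw [sub_sub_eq_add_sub, add_comm, add_sub_assoc]
      exact add_mem he.2 (X.sub_restrictTo_mem hz.1)
    · simp [hdz, hde]
  · intro h
    obtain ⟨a, ha, b, hb, rfl⟩ := Submodule.mem_sup.1 h
    refine ⟨X.restrictTo S q b, X.restrictTo_mem_inter S hb.1, ?_⟩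
    rw [map_add, X.restrictTo_of_mem ha.1, map_add, LinearMap.mem_ker.1 ha.2, zero_add]

theorem finrank_cyclesOn_union (S T : Set X.cell) (q : ℤ) :
    finrank F (X.cyclesOn (S ∪ T) q) + finrank F (X.boundariesOn (S ∩ T) q (q - 1))
        + finrank F (X.cyclesOn (S ∩ T) q)
      = finrank F (X.cyclesOn S q) + finrank F (X.cyclesOn T q)
        + finrank F ↥(X.boundariesOn S q (q - 1) ⊓ X.boundariesOn T q (q - 1)) := by
  have hcount := finrank_add_finrank_eq_of_forall_mem_sub
    (X.D Set.univ q (q - 1) ∘ₗ X.restrictTo S q ∘ₗ (X.cyclesOn (S ∪ T) q).subtype)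
    (le_inf (X.boundariesOn_mono Set.inter_subset_left q (q - 1))
      (X.boundariesOn_mono Set.inter_subset_right q (q - 1)))
    (by rintro _ ⟨z, rfl⟩; exact X.D_restrictTo_mem_boundariesOn S T z.2)
    (fun w hw => by
      obtain ⟨z, hz, hzw⟩ := X.exists_D_restrictTo_sub_mem S T hw
      exact ⟨⟨z, hz⟩, hzw⟩)
  have hker : (X.boundariesOn (S ∩ T) q (q - 1)).comap
      (X.D Set.univ q (q - 1) ∘ₗ X.restrictTo S q ∘ₗ (X.cyclesOn (S ∪ T) q).subtype)
      = (X.cyclesOn S q ⊔ X.cyclesOn T q).comap (X.cyclesOn (S ∪ T) q).subtype := by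
    ext z
    exact X.D_restrictTo_mem_boundariesOn_inter_iff S T z.2
  have hsup := Submodule.finrank_sup_add_finrank_inf_eq (X.cyclesOn S q) (X.cyclesOn T q)
  rw [hker, finrank_comap_subtype, inf_eq_right.2 (sup_le (X.cyclesOn_mono
    Set.subset_union_left q) (X.cyclesOn_mono Set.subset_union_right q))] at hcount
  rw [← X.cyclesOn_inter] at hsup
  omega

end MayerVietoris

theorem inclC_mem_ker_D {S T : Set X.cell} (hST : S ⊆ T) (hS : X.FaceClosed S) {a b : ℤ}
    {z : X.Cz S a} (hz : z ∈ LinearMap.ker (X.D S a b)) :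
    X.inclC S T hST a z ∈ LinearMap.ker (X.D T a b) := by
  rw [LinearMap.mem_ker, ← LinearMap.comp_apply, X.D_comp_inclC hST hS, LinearMap.comp_apply,
    LinearMap.mem_ker.1 hz, map_zero]

theorem Hmap_mk {S T : Set X.cell} (hST : S ⊆ T) (hS : X.FaceClosed S) (q : ℤ)
    (z : LinearMap.ker (X.D S q (q - 1))) :
    X.Hmap S T hST hS q (Submodule.Quotient.mk z)
      = Submodule.Quotient.mk ⟨X.inclC S T hST q z, X.inclC_mem_ker_D hST hS z.2⟩ := rfl

theorem Hmap_Hmap {R S T : Set X.cell} (hRS : R ⊆ S) (hST : S ⊆ T) (hR : X.FaceClosed R)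
    (hS : X.FaceClosed S) (q : ℤ) (x : X.Hsp R q) :
    X.Hmap S T hST hS q (X.Hmap R S hRS hR q x) = X.Hmap R T (hRS.trans hST) hR q x := by
  obtain ⟨z, rfl⟩ := Submodule.mkQ_surjective _ x
  simp only [Submodule.mkQ_apply, Hmap_mk, X.inclC_inclC]

theorem Hmap_mk_eq_zero_iff {S T : Set X.cell} (hST : S ⊆ T) (hS : X.FaceClosed S)
    (hT : X.FaceClosed T) (q : ℤ) (z : LinearMap.ker (X.D S q (q - 1))) :
    X.Hmap S T hST hS q (Submodule.Quotient.mk z) = 0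
      ↔ X.inclC S Set.univ (Set.subset_univ S) q z ∈ X.boundariesOn T (q + 1) q := by
  rw [Hmap_mk, Submodule.Quotient.mk_eq_zero, Submodule.mem_comap]
  change X.inclC S T hST q z ∈ LinearMap.range (X.D T (q + 1) q) ↔ _
  rw [← Submodule.comap_map_eq_of_injective (X.inclC_injective T Set.univ (Set.subset_univ T) q)
    (LinearMap.range _), Submodule.mem_comap, X.inclC_inclC, X.map_inclC_range hT]
  rfl

/-- A class `[z]` dies in both `H_q(A)` and `H_q(B)` iff `z` is a boundary on `A` and on `B`; such
boundaries are cycles on `A ∩ B ⊆ D`, so the common kernel is `(B_A ∩ B_B) / B_D`. -/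
theorem finrank_ker_Hmap_inf_ker_Hmap {A B D : Set X.cell} (hA : X.FaceClosed A)
    (hB : X.FaceClosed B) (hD : X.FaceClosed D) (hDA : D ⊆ A) (hDB : D ⊆ B)
    (hABD : A ∩ B ⊆ D) (q : ℤ) :
    finrank F ↥(LinearMap.ker (X.Hmap D A hDA hD q) ⊓ LinearMap.ker (X.Hmap D B hDB hD q))
        + finrank F (X.boundariesOn D (q + 1) q)
      = finrank F ↥(X.boundariesOn A (q + 1) q ⊓ X.boundariesOn B (q + 1) q) := by
  let φ := X.inclC D Set.univ (Set.subset_univ D) q ∘ₗ (LinearMap.ker (X.D D q (q - 1))).subtype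
  have hφ : Function.Injective φ :=
    (X.inclC_injective D Set.univ (Set.subset_univ D) q).comp (Submodule.injective_subtype _)
  have hrange : X.boundariesOn A (q + 1) q ⊓ X.boundariesOn B (q + 1) q ≤ LinearMap.range φ := by
    rw [LinearMap.range_comp, Submodule.range_subtype, X.map_inclC_ker hD]
    refine (inf_le_inf (X.boundariesOn_le_cyclesOn hA q) (X.boundariesOn_le_cyclesOn hB q)).trans ?_
    rw [← cyclesOn_inter]
    exact X.cyclesOn_mono hABD q
  have hcomap : (LinearMap.ker (X.Hmap D A hDA hD q) ⊓ LinearMap.ker (X.Hmap D B hDB hD q)).comap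
      (Submodule.mkQ _) = (X.boundariesOn A (q + 1) q ⊓ X.boundariesOn B (q + 1) q).comap φ := by
    ext z
    simp only [Submodule.mem_comap, Submodule.mem_inf, LinearMap.mem_ker, Submodule.mkQ_apply,
      X.Hmap_mk_eq_zero_iff hDA hD hA, X.Hmap_mk_eq_zero_iff hDB hD hB]
    rfl
  have h := finrank_comap_mkQ _
    (LinearMap.ker (X.Hmap D A hDA hD q) ⊓ LinearMap.ker (X.Hmap D B hDB hD q))
  rw [hcomap, ← finrank_map_of_injective hφ, Submodule.map_comap_eq, inf_eq_right.2 hrange,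
    finrank_comap_subtype, inf_eq_right.2 (X.range_D_le_ker_D hD q), X.finrank_range_D hD] at h
  exact h.symm

theorem Hd_union_add_Hd {A B D : Set X.cell} (hA : X.FaceClosed A) (hB : X.FaceClosed B)
    (hD : X.FaceClosed D) (hDA : D ⊆ A) (hDB : D ⊆ B) (hABD : A ∩ B ⊆ D) (q : ℤ) :
    X.Hd (A ∪ B) q + X.Hd D q
      = X.Hd A q + X.Hd B q
        + finrank F ↥(LinearMap.ker (X.Hmap D A hDA hD q) ⊓ LinearMap.ker (X.Hmap D B hDB hD q))
        + finrank F ↥(LinearMap.ker (X.Hmap D A hDA hD (q - 1))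
            ⊓ LinearMap.ker (X.Hmap D B hDB hD (q - 1))) := by
  have hDAB : A ∩ B = D := subset_antisymm hABD (Set.subset_inter hDA hDB)
  have hU := X.Hd_add_finrank_boundariesOn (hA.union hB) q
  have hA' := X.Hd_add_finrank_boundariesOn hA q
  have hB' := X.Hd_add_finrank_boundariesOn hB q
  have hD' := X.Hd_add_finrank_boundariesOn hD q
  have hcycles := X.finrank_cyclesOn_union A B q
  have hbdries := X.finrank_boundariesOn_union A B (q + 1) q
  have hker := X.finrank_ker_Hmap_inf_ker_Hmap hA hB hD hDA hDB hABD q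
  have hker' := X.finrank_ker_Hmap_inf_ker_Hmap hA hB hD hDA hDB hABD (q - 1)
  have hshift : ∀ S, X.boundariesOn S q (q - 1) = X.boundariesOn S (q - 1 + 1) (q - 1) := by
    simp
  rw [hDAB, hshift, hshift, hshift] at hcycles
  omega

section Grades

variable {n : ℕ} (g : X.cell → Fin n → ℤ)

theorem Xset_sub_eS_anti (u : Fin n → ℤ) {s t : Finset (Fin n)} (h : s ⊆ t) :
    X.Xset g (u - eS t) ⊆ X.Xset g (u - eS s) :=
  X.Xset_mono g (sub_le_sub_left (eS_mono h) u)

theorem Xset_inter (v w : Fin n → ℤ) : X.Xset g v ∩ X.Xset g w = X.Xset g (v ⊓ w) :=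
  Set.ext fun c => show g c ≤ v ∧ g c ≤ w ↔ g c ≤ v ⊓ w from le_inf_iff.symm

end Grades

section TwoParameters

variable (g : X.cell → Fin 2 → ℤ) (u : Fin 2 → ℤ)

theorem Uset_eq_union : X.Uset g u = X.Xset g (u - eS {0}) ∪ X.Xset g (u - eS {1}) := by
  ext c
  simp [Uset, eS_singleton, Fin.exists_fin_two]

theorem Xset_inter_eq_Xset_sub_eS_pair :
    X.Xset g (u - eS {0}) ∩ X.Xset g (u - eS {1}) = X.Xset g (u - eS {0, 1}) := by
  rw [Xset_inter]
  congr 1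
  funext i
  fin_cases i <;> simp [eS, eb]

theorem Xset_sub_eS_pair_subset (j : Fin 2) : X.Xset g (u - eS {0, 1}) ⊆ X.Xset g (u - eS {j}) :=
  X.Xset_sub_eS_anti g u (by fin_cases j <;> decide)

end TwoParameters

section Koszul

variable {n : ℕ} (g : X.cell → Fin n → ℤ) (hg : ∀ τ σ : X.cell, X.κ τ σ ≠ 0 → g σ ≤ g τ)
  (u : Fin n → ℤ) (q : ℤ)

theorem KD_apply {a b : ℤ} (f : X.Ksp g q u a) (t : {s : Finset (Fin n) // (s.card : ℤ) = b}) :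
    X.KD g hg q u a b f t = ∑ j ∈ t.1ᶜ,
      ((-1 : F) ^ (t.1.filter (fun k => j < k)).card) •
        (if h : ((insert j t.1).card : ℤ) = a then
          X.Hmap (X.Xset g (u - eS (insert j t.1))) (X.Xset g (u - eS t.1))
            (X.Xset_mono g (sub_le_sub_left (eS_le_insert j t.1) u))
            (X.Xset_faceClosed g hg _) q (f ⟨insert j t.1, h⟩)
        else 0) := rfl

theorem Hmap_Ksp_congr {i : ℤ} (f : X.Ksp g q u i) {s t : {s : Finset (Fin n) // (s.card : ℤ) = i}}
    (hst : s.1 = t.1) {T : Set X.cell} (hs : X.Xset g (u - eS s.1) ⊆ T)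
    (ht : X.Xset g (u - eS t.1) ⊆ T) :
    X.Hmap _ T hs (X.Xset_faceClosed g hg _) q (f s)
      = X.Hmap _ T ht (X.Xset_faceClosed g hg _) q (f t) := by
  obtain rfl : s = t := Subtype.ext hst
  rfl

theorem finrank_Ksp (i : ℤ) :
    finrank F (X.Ksp g q u i)
      = ∑ s ∈ Finset.univ.filter (fun s : Finset (Fin n) => (s.card : ℤ) = i),
          X.Hd (X.Xset g (u - eS s)) q := by
  rw [Module.finrank_pi_fintype]
  exact (Finset.sum_subtype _ (fun s => by simp) fun s => X.Hd (X.Xset g (u - eS s)) q).symm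

theorem finrank_Ksp_zero : finrank F (X.Ksp g q u 0) = X.Hd (X.Xset g u) q := by
  rw [finrank_Ksp, show Finset.univ.filter (fun s : Finset (Fin n) => (s.card : ℤ) = 0) = {∅} by
    ext s; simp, Finset.sum_singleton, eS_empty, sub_zero]

theorem Ksp_subsingleton {i : ℤ} (hi : i < 0 ∨ n < i) : Subsingleton (X.Ksp g q u i) := by
  have : IsEmpty {s : Finset (Fin n) // (s.card : ℤ) = i} := ⟨fun s => by
    have hcard := (Finset.card_le_univ s.1).trans_eq (Fintype.card_fin n)
    have := s.2
    omega⟩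
  infer_instance

end Koszul

section KoszulTwoParameters

variable (g : X.cell → Fin 2 → ℤ) (hg : ∀ τ σ : X.cell, X.κ τ σ ≠ 0 → g σ ≤ g τ)
  (u : Fin 2 → ℤ) (q : ℤ)

theorem finrank_Ksp_one :
    finrank F (X.Ksp g q u 1)
      = X.Hd (X.Xset g (u - eS {0})) q + X.Hd (X.Xset g (u - eS {1})) q := by
  rw [finrank_Ksp, show Finset.univ.filter (fun s : Finset (Fin 2) => (s.card : ℤ) = 1)
    = {{0}, {1}} by decide, Finset.sum_pair (by decide)]

theorem finrank_Ksp_two : finrank F (X.Ksp g q u 2) = X.Hd (X.Xset g (u - eS {0, 1})) q := by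
  rw [finrank_Ksp, show Finset.univ.filter (fun s : Finset (Fin 2) => (s.card : ℤ) = 2)
    = {{0, 1}} by decide, Finset.sum_singleton]

theorem KD_two_one_apply_zero (f : X.Ksp g q u 2) :
    X.KD g hg q u 2 1 f ⟨{0}, rfl⟩
      = X.Hmap _ _ (X.Xset_sub_eS_pair_subset g u 0)
          (X.Xset_faceClosed g hg _) q (f ⟨{0, 1}, rfl⟩) := by
  rw [KD_apply, show ({0} : Finset (Fin 2))ᶜ = {1} by decide, Finset.sum_singleton,
    dif_pos (by decide), show (({0} : Finset (Fin 2)).filter (1 < ·)).card = 0 by decide,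
    pow_zero, one_smul]
  exact X.Hmap_Ksp_congr g hg u q f (s := ⟨insert 1 {0}, by decide⟩) (t := ⟨{0, 1}, rfl⟩)
    (by decide) _ _

theorem KD_two_one_apply_one (f : X.Ksp g q u 2) :
    X.KD g hg q u 2 1 f ⟨{1}, rfl⟩
      = -X.Hmap _ _ (X.Xset_sub_eS_pair_subset g u 1)
          (X.Xset_faceClosed g hg _) q (f ⟨{0, 1}, rfl⟩) := by
  rw [KD_apply, show ({1} : Finset (Fin 2))ᶜ = {0} by decide, Finset.sum_singleton,
    dif_pos (by decide), show (({1} : Finset (Fin 2)).filter (0 < ·)).card = 1 by decide,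
    pow_one, neg_one_smul]

theorem KD_one_zero_apply_empty (f : X.Ksp g q u 1) :
    X.KD g hg q u 1 0 f ⟨∅, rfl⟩
      = X.Hmap _ _ (X.Xset_sub_eS_anti g u (Finset.empty_subset {0}))
          (X.Xset_faceClosed g hg _) q (f ⟨{0}, rfl⟩)
        + X.Hmap _ _ (X.Xset_sub_eS_anti g u (Finset.empty_subset {1}))
          (X.Xset_faceClosed g hg _) q (f ⟨{1}, rfl⟩) := by
  rw [KD_apply, show (∅ : Finset (Fin 2))ᶜ = {0, 1} by decide, Finset.sum_pair (by decide),
    dif_pos (by decide), dif_pos (by decide)]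
  simp only [Finset.filter_empty, Finset.card_empty, pow_zero, one_smul]
  exact congrArg₂ _
    (X.Hmap_Ksp_congr g hg u q f (s := ⟨insert 0 ∅, rfl⟩) (t := ⟨{0}, rfl⟩) (by simp) _ _)
    (X.Hmap_Ksp_congr g hg u q f (s := ⟨insert 1 ∅, rfl⟩) (t := ⟨{1}, rfl⟩) (by simp) _ _)

theorem range_KD_two_one_le_ker :
    LinearMap.range (X.KD g hg q u 2 1) ≤ LinearMap.ker (X.KD g hg q u 1 0) := by
  rintro _ ⟨f, rfl⟩
  funext ⟨s, hs⟩
  obtain rfl : s = ∅ := Finset.card_eq_zero.1 (by exact_mod_cast hs)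
  rw [KD_one_zero_apply_empty, KD_two_one_apply_zero, KD_two_one_apply_one, map_neg]
  exact (congrArg₂ (· + -·) (X.Hmap_Hmap _ _ _ _ q _) (X.Hmap_Hmap _ _ _ _ q _)).trans
    (add_neg_cancel _)

theorem ker_KD_two_one :
    LinearMap.ker (X.KD g hg q u 2 1) = Submodule.comap
      (LinearMap.proj (⟨{0, 1}, rfl⟩ : {s : Finset (Fin 2) // (s.card : ℤ) = 2}))
      (LinearMap.ker (X.Hmap _ _ (X.Xset_sub_eS_pair_subset g u 0) (X.Xset_faceClosed g hg _) q)
        ⊓ LinearMap.ker (X.Hmap _ _ (X.Xset_sub_eS_pair_subset g u 1)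
          (X.Xset_faceClosed g hg _) q)) := by
  ext f
  rw [LinearMap.mem_ker, Submodule.mem_comap, Submodule.mem_inf, LinearMap.mem_ker,
    LinearMap.mem_ker, LinearMap.proj_apply]
  constructor
  · intro h
    exact ⟨(X.KD_two_one_apply_zero g hg u q f).symm.trans (congrFun h _),
      neg_eq_zero.1 ((X.KD_two_one_apply_one g hg u q f).symm.trans (congrFun h _))⟩
  · rintro ⟨h0, h1⟩
    funext ⟨s, hs⟩
    rcases (by decide : ∀ s : Finset (Fin 2), (s.card : ℤ) = 1 → s = {0} ∨ s = {1}) s hs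
      with rfl | rfl
    · exact (X.KD_two_one_apply_zero g hg u q f).trans h0
    · exact (X.KD_two_one_apply_one g hg u q f).trans (by rw [h1, neg_zero]; rfl)

theorem finrank_ker_KD_two_one :
    finrank F (LinearMap.ker (X.KD g hg q u 2 1)) = finrank F ↥(
      LinearMap.ker (X.Hmap _ _ (X.Xset_sub_eS_pair_subset g u 0) (X.Xset_faceClosed g hg _) q)
        ⊓ LinearMap.ker (X.Hmap _ _ (X.Xset_sub_eS_pair_subset g u 1)
          (X.Xset_faceClosed g hg _) q)) := by
  have : Subsingleton {s : Finset (Fin 2) // (s.card : ℤ) = 2} := ⟨fun s t => Subtype.ext <|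
    (by decide : ∀ s t : Finset (Fin 2), (s.card : ℤ) = 2 → (t.card : ℤ) = 2 → s = t) _ _ s.2 t.2⟩
  let π := LinearMap.proj (R := F) (φ := fun s : {s : Finset (Fin 2) // (s.card : ℤ) = 2} =>
    X.Hsp (X.Xset g (u - eS s.1)) q) ⟨{0, 1}, rfl⟩
  have hπ : Function.Bijective π :=
    ⟨fun f f' h => funext fun t => Subsingleton.elim ⟨{0, 1}, rfl⟩ t ▸ h,
      fun x => ⟨Pi.single _ x, by simp [π]⟩⟩
  rw [ker_KD_two_one, ← finrank_map_of_injective hπ.1, Submodule.map_comap_eq_of_surjective hπ.2]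

end KoszulTwoParameters

section BettiTables

variable (g : X.cell → Fin 2 → ℤ) (hg : ∀ τ σ : X.cell, X.κ τ σ ≠ 0 → g σ ≤ g τ)
  (u : Fin 2 → ℤ) (q : ℤ)

theorem xi_zero_add_finrank_range :
    X.xi g hg 0 q u + finrank F (LinearMap.range (X.KD g hg q u 1 0))
      = X.Hd (X.Xset g u) q := by
  have : Subsingleton (X.Ksp g q u (-1)) := X.Ksp_subsingleton g u q (Or.inl (by norm_num))
  have hker : LinearMap.ker (X.KD g hg q u 0 (-1)) = ⊤ :=
    LinearMap.ker_eq_top.2 (Subsingleton.elim _ _)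
  show finrank F (Hquot (X.KD g hg q u 0 (-1)) (X.KD g hg q u 1 0)) + _ = _
  rw [← X.finrank_Ksp_zero g u q, ← finrank_top F (X.Ksp g q u 0), ← hker]
  exact finrank_Hquot_add_finrank_range (le_top.trans_eq hker.symm)

theorem xi_one_add_finrank_range_add_finrank_range :
    X.xi g hg 1 q u + finrank F (LinearMap.range (X.KD g hg q u 2 1))
        + finrank F (LinearMap.range (X.KD g hg q u 1 0))
      = X.Hd (X.Xset g (u - eS {0})) q + X.Hd (X.Xset g (u - eS {1})) q := by
  have hhom : X.xi g hg 1 q u + finrank F (LinearMap.range (X.KD g hg q u 2 1))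
      = finrank F (LinearMap.ker (X.KD g hg q u 1 0)) :=
    finrank_Hquot_add_finrank_range (X.range_KD_two_one_le_ker g hg u q)
  have hd1 := LinearMap.finrank_range_add_finrank_ker (X.KD g hg q u 1 0)
  rw [X.finrank_Ksp_one g u q] at hd1
  omega

theorem xi_two_eq_finrank_ker :
    X.xi g hg 2 q u = finrank F (LinearMap.ker (X.KD g hg q u 2 1)) := by
  have : Subsingleton (X.Ksp g q u 3) := X.Ksp_subsingleton g u q (Or.inr (by norm_num))
  have hrange : LinearMap.range (X.KD g hg q u 3 2) = ⊥ :=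
    LinearMap.range_eq_bot.2 (Subsingleton.elim _ _)
  show finrank F (Hquot (X.KD g hg q u 2 1) (X.KD g hg q u 3 2)) = _
  have h := finrank_Hquot_add_finrank_range (dout := X.KD g hg q u 2 1) (hrange.trans_le bot_le)
  rwa [show finrank F (LinearMap.range (X.KD g hg q u 3 2)) = 0 by rw [hrange, finrank_bot],
    add_zero] at h

end BettiTables

end CellComplex

theorem two_parameter_union_homology_general {F : Type} [Field F] (X : CellComplex F)
    (g : X.cell → Fin 2 → ℤ)
    (hg : ∀ τ σ : X.cell, X.κ τ σ ≠ 0 → g σ ≤ g τ)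
    (u : Fin 2 → ℤ) (q : ℕ) :
    (X.Hd (X.Uset g u) (q : ℤ) : ℤ)
      = (X.Hd (X.Xset g u) (q : ℤ) : ℤ) - (X.xi g hg 0 (q : ℤ) u : ℤ)
        + (X.xi g hg 1 (q : ℤ) u : ℤ) + (X.xi g hg 2 ((q : ℤ) - 1) u : ℤ) := by
  have hmv := X.Hd_union_add_Hd (X.Xset_faceClosed g hg _) (X.Xset_faceClosed g hg _)
    (X.Xset_faceClosed g hg _) (X.Xset_sub_eS_pair_subset g u 0)
    (X.Xset_sub_eS_pair_subset g u 1)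
    (X.Xset_inter_eq_Xset_sub_eS_pair g u).le q
  have hxi0 := X.xi_zero_add_finrank_range g hg u q
  have hxi1 := X.xi_one_add_finrank_range_add_finrank_range g hg u q
  have hxi2 := X.xi_two_eq_finrank_ker g hg u (q - 1)
  have hd2 := LinearMap.finrank_range_add_finrank_ker (X.KD g hg q u 2 1)
  have hK2 := X.finrank_Ksp_two g u q
  have hker := X.finrank_ker_KD_two_one g hg u q
  have hker' := X.finrank_ker_KD_two_one g hg u (q - 1)
  rw [X.Uset_eq_union]
  omega

/-- **Two-parameter equality for the homology of the union** (`n = 2`):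
`dim H_q(X^{u-e_1} ∪ X^{u-e_2}) = dim H_q(X^u) - ξ_0^q(u) + ξ_1^q(u) + ξ_2^{q-1}(u)`. -/
theorem two_parameter_union_homology {F : Type} [Field F] (X : CellComplex F)
    (g : X.cell → Fin 2 → ℤ)
    (hbdd : ∀ c : X.cell, 0 ≤ g c)
    (hg : ∀ τ σ : X.cell, X.κ τ σ ≠ 0 → g σ ≤ g τ)
    (u : Fin 2 → ℤ) (q : ℕ) :
    (X.Hd (X.Uset g u) (q : ℤ) : ℤ)
      = (X.Hd (X.Xset g u) (q : ℤ) : ℤ) - (X.xi g hg 0 (q : ℤ) u : ℤ)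
        + (X.xi g hg 1 (q : ℤ) u : ℤ) + (X.xi g hg 2 ((q : ℤ) - 1) u : ℤ) :=
  two_parameter_union_homology_general X g hg u q
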